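/- arXiv:math/9712209 — 6 statements merged into one kernel-verified Lean document; each statement's English description precedes it below -/
import Mathlib

section
/- For every positive integer n, Q(n,n) = 1/3. -/
/-!
Write `t(n,i) = (-1)^i (2n-i)_{2i} / ((2n-2i-1) i!²)` and `S(n) = ∑_{i<n} t(n,i)`, so that the sum
in `Q(n,n)` is `(-1)^(n-1) S(n)`. Zeilberger's creative telescoping produces a rational certificate
`R(n,i)` with `t(n+1,i) + c(n) t(n,i) = R(n,i) t(n,i) - R(n,i+1) t(n,i+1)`, where
`c(n) = 3(36n²-1)/(2n+1)²`. Summing over `i` gives `S(n+1) = -c(n) S(n)`, so `S(n)` is an explicit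
ratio of factorials, and that ratio cancels the factorials in the prefactor of `Q(n,n)`.
-/

/-- Shifted factorial `(a)_k = a(a+1)···(a+k-1)`. -/
def shifted (a : ℚ) (k : ℕ) : ℚ := ∏ t ∈ Finset.range k, (a + t)

/-- `Q(m,n)` from the paper. -/
def Qfun (m n : ℕ) : ℚ :=
  ((Nat.factorial (2*n) : ℚ)^2 * (Nat.factorial (2*m) : ℚ) * (Nat.factorial (m + 2*n - 1) : ℚ)) /
    (2 * (Nat.factorial n : ℚ)^2 * (Nat.factorial m : ℚ) * (Nat.factorial (2*m + 4*n - 2) : ℚ)) *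
  ∑ i ∈ Finset.range n,
    ((-1 : ℚ)^(n - i - 1) / (2*(n:ℚ) - 2*(i:ℚ) - 1)) *
      (shifted ((m:ℚ) + (n:ℚ) - (i:ℚ)) (2*i) / (Nat.factorial i : ℚ)^2)

open Finset
open scoped Nat

lemma shifted_succ_right (a : ℚ) (k : ℕ) : shifted a (k + 1) = shifted a k * (a + k) :=
  prod_range_succ _ _

lemma shifted_succ_left (a : ℚ) (k : ℕ) : shifted a (k + 1) = a * shifted (a + 1) k := by
  simp only [shifted, prod_range_succ', Nat.cast_succ, Nat.cast_zero, add_zero]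
  rw [mul_comm]
  congr! 2 with t
  ring

lemma mul_mul_shifted_add_two (a : ℚ) (k : ℕ) :
    a * (a + 1) * shifted (a + 2) k = shifted a k * (a + k) * (a + k + 1) := by
  calc a * (a + 1) * shifted (a + 2) k = shifted a (k + 2) := by
        rw [shifted_succ_left, shifted_succ_left, add_assoc, one_add_one_eq_two, mul_assoc]
    _ = shifted a k * (a + k) * (a + k + 1) := by
        rw [shifted_succ_right, shifted_succ_right]
        push_cast
        ring

def qTerm (n i : ℕ) : ℚ :=
  (-1) ^ i / (2 * n - 2 * i - 1) * (shifted (2 * n - i) (2 * i) / (i ! : ℚ) ^ 2)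

lemma qTerm_succ_right (n i : ℕ) :
    qTerm n (i + 1) = -((2 * n - i - 1) * (2 * n + i) * (2 * n - 2 * i - 1))
      / ((i + 1) ^ 2 * (2 * n - 2 * i - 3)) * qTerm n i := by
  -- The odd denominators are nonzero; the facts are stated in the shape `field_simp` gives them.
  have hne₁ : (2 * (n - i) - 1 : ℚ) ≠ 0 := by exact_mod_cast (by omega : 2 * ((n : ℤ) - i) - 1 ≠ 0)
  have hne₂ : (2 * (n - i) - 3 : ℚ) ≠ 0 := by exact_mod_cast (by omega : 2 * ((n : ℤ) - i) - 3 ≠ 0)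
  simp only [qTerm, mul_add_one, Nat.factorial_succ]
  rw [shifted_succ_left, shifted_succ_right]
  push_cast
  rw [show (2 * n - (i + 1) + 1 : ℚ) = 2 * n - i by ring,
    show (2 * n - 2 * (i + 1) - 1 : ℚ) = 2 * n - 2 * i - 3 by ring]
  field_simp
  ring

lemma qTerm_succ_left (n i : ℕ) (hi : i < 2 * n) :
    qTerm (n + 1) i = (2 * n + i) * (2 * n + i + 1) * (2 * n - 2 * i - 1)
      / ((2 * n - i) * (2 * n - i + 1) * (2 * n - 2 * i + 1)) * qTerm n i := by
  have hne₁ : (2 * (n - i) - 1 : ℚ) ≠ 0 := by exact_mod_cast (by omega : 2 * ((n : ℤ) - i) - 1 ≠ 0)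
  have hne₂ : (2 * (n - i) + 1 : ℚ) ≠ 0 := by exact_mod_cast (by omega : 2 * ((n : ℤ) - i) + 1 ≠ 0)
  have hne₃ : (2 * n - i : ℚ) ≠ 0 := by exact_mod_cast (by omega : 2 * (n : ℤ) - i ≠ 0)
  have hne₄ : (2 * n - i + 1 : ℚ) ≠ 0 := by exact_mod_cast (by omega : 2 * (n : ℤ) - i + 1 ≠ 0)
  have hs := mul_mul_shifted_add_two (2 * n - i) (2 * i)
  simp only [qTerm]
  push_cast at hs ⊢
  rw [show (2 * (n + 1) - i : ℚ) = 2 * n - i + 2 by ring,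
    show (2 * (n + 1) - 2 * i - 1 : ℚ) = 2 * n - 2 * i + 1 by ring]
  field_simp
  linear_combination hs

/-- Found by Zeilberger's algorithm: see `qTerm_telescope`. -/
def zeilbergerCert (n i : ℕ) : ℚ :=
  (1 - 2 * n + 2 * i) * i ^ 2 *
      (-3 + 9 * i - 6 * i ^ 2 - 30 * n + 62 * n * i - 28 * n * i ^ 2
        - 104 * n ^ 2 + 104 * n ^ 2 * i - 112 * n ^ 3) /
    (n * (2 * n + 1) ^ 2 * (2 * n - i) * (2 * n + 1 - i) * (2 * n + 1 - 2 * i))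

lemma qTerm_telescope (n i : ℕ) (hi : i < n) :
    qTerm (n + 1) i + 3 * (36 * n ^ 2 - 1) / (2 * n + 1) ^ 2 * qTerm n i
      = zeilbergerCert n i * qTerm n i - zeilbergerCert n (i + 1) * qTerm n (i + 1) := by
  rw [qTerm_succ_left n i (by omega), qTerm_succ_right, zeilbergerCert, zeilbergerCert]
  -- With `n = i + d + 1`, `ring_nf` turns every denominator into a polynomial in `i, d` with
  -- positive coefficients, except `2 * n - 2 * i - 3 = 2 * d - 1`, which is odd.
  obtain ⟨d, rfl⟩ := Nat.exists_eq_add_of_lt hi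
  have hodd : (-1 + d * 2 : ℚ) ≠ 0 := by exact_mod_cast (by omega : (-1 + d * 2 : ℤ) ≠ 0)
  push_cast
  field_simp (disch := ring_nf; first | positivity | assumption)
  ring

lemma zeilbergerCert_zero (n : ℕ) : zeilbergerCert n 0 = 0 := by
  simp [zeilbergerCert]

def qSum (n : ℕ) : ℚ := ∑ i ∈ range n, qTerm n i

lemma qTerm_succ_self (n : ℕ) (hn : 1 ≤ n) : qTerm (n + 1) n = zeilbergerCert n n * qTerm n n := by
  have hn0 : (n : ℚ) ≠ 0 := by exact_mod_cast (by omega : n ≠ 0)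
  rw [qTerm_succ_left n n (by omega), zeilbergerCert]
  field_simp (disch := ring_nf; first | positivity | assumption)
  ring

lemma qSum_succ (n : ℕ) (hn : 1 ≤ n) :
    qSum (n + 1) = -(3 * (36 * n ^ 2 - 1) / (2 * n + 1) ^ 2) * qSum n := by
  have htel : ∀ i ∈ range n, qTerm (n + 1) i = zeilbergerCert n i * qTerm n i
      - zeilbergerCert n (i + 1) * qTerm n (i + 1) - 3 * (36 * n ^ 2 - 1) / (2 * n + 1) ^ 2 * qTerm n i :=
    fun i hi ↦ eq_sub_of_add_eq (qTerm_telescope n i (mem_range.1 hi))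
  simp only [qSum]
  rw [sum_range_succ, sum_congr rfl htel, sum_sub_distrib,
    sum_range_sub' (fun i ↦ zeilbergerCert n i * qTerm n i), ← mul_sum, qTerm_succ_self n hn,
    zeilbergerCert_zero]
  ring

lemma qSum_succ_eq_factorials (m : ℕ) :
    qSum (m + 1) = (-1) ^ m * (2 / 3) * ((m + 1)! ^ 3 * (6 * m + 4)! : ℚ)
      / ((2 * m + 2)! ^ 3 * (3 * m + 2)! : ℚ) := by
  induction m with
  | zero => norm_num [qSum, qTerm, shifted]
  | succ m ih =>
    rw [qSum_succ _ (by omega), ih,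
      show 6 * (m + 1) + 4 = 6 * m + 4 + 1 + 1 + 1 + 1 + 1 + 1 by ring,
      show 2 * (m + 1) + 2 = 2 * m + 2 + 1 + 1 by ring,
      show 3 * (m + 1) + 2 = 3 * m + 2 + 1 + 1 + 1 by ring]
    simp only [Nat.factorial_succ]
    push_cast
    field_simp
    ring

lemma sum_Qfun_self_eq_neg_one_pow_mul_qSum (n : ℕ) :
    ∑ i ∈ range n, ((-1 : ℚ) ^ (n - i - 1) / (2 * n - 2 * i - 1)) *
      (shifted (n + n - i) (2 * i) / (i ! : ℚ) ^ 2) = (-1) ^ (n - 1) * qSum n := by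
  rw [qSum, mul_sum]
  refine sum_congr rfl fun i hi ↦ ?_
  have hsign : (-1 : ℚ) ^ (n - i - 1) = (-1) ^ (n - 1) * (-1) ^ i := by
    have hi := mem_range.1 hi
    rw [← pow_add, neg_one_pow_eq_pow_mod_two, neg_one_pow_eq_pow_mod_two (n := n - 1 + i)]
    congr 1
    omega
  rw [qTerm, hsign, ← two_mul]
  ring

theorem Q_eq_one_third (n : ℕ) (hn : 1 ≤ n) : Qfun n n = 1/3 := by
  obtain ⟨m, rfl⟩ := Nat.exists_eq_add_of_le' hn
  rw [Qfun, sum_Qfun_self_eq_neg_one_pow_mul_qSum, qSum_succ_eq_factorials, Nat.add_sub_cancel,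
    show m + 1 + 2 * (m + 1) - 1 = 3 * m + 2 by omega,
    show 2 * (m + 1) + 4 * (m + 1) - 2 = 6 * m + 4 by omega,
    show 2 * (m + 1) = 2 * m + 2 by ring]
  have hsq : ((-1 : ℚ) ^ m) ^ 2 = 1 := by rw [← pow_mul, mul_comm, pow_mul, neg_one_sq, one_pow]
  field_simp
  linear_combination hsq
end

section
/- Let a > 0 be a real number and let (m_n)_{n≥1} be a sequence of positive integers such that m_n/n → a as n → ∞. Then ((2n)!^2 · (2m_n)! · (m_n+2n−1)!)/(2 · n!^2 · m_n! · (2m_n+4n−2)!) · ((m_n)_{n−1} · (m_n+n+1)_{n−1})/((n−1)!)^2 → 2·√(a(a+2)) / (π·(a+1)^2) as n → ∞. -/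
/-!
Writing the factorials through central binomial coefficients, the prefactor equals
`C(n)² C(m) / C(m + 2n - 1)` times a rational function of `m` and `n`. Stirling's formula gives
`C(k) ~ 4ᵏ / √(πk)`; the powers of `4` cancel exactly, and what remains is homogeneous of
degree `0` in `(m, n)` up to lower-order terms, so it converges once `m / n → a`.
-/

/-- Shifted factorial `(x)_k = x(x+1)···(x+k-1)` for a real `x`. -/
def shiftedR (x : ℝ) (k : ℕ) : ℝ := ∏ t ∈ Finset.range k, (x + t)

open Filter Real Topology Asymptotics
open scoped Nat

lemma shiftedR_natCast (n k : ℕ) : shiftedR n k = n.ascFactorial k := by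
  simp [shiftedR, Nat.ascFactorial_eq_prod_range]

lemma cast_centralBinom_eq_factorial_div (k : ℕ) : (k.centralBinom : ℝ) = (2 * k)! / k ! ^ 2 := by
  rw [Nat.centralBinom_eq_two_mul_choose, Nat.cast_choose ℝ (by omega), two_mul,
    Nat.add_sub_cancel, sq]

noncomputable def centralBinomAsymp (k : ℕ) : ℝ := 4 ^ k / √(π * k)

lemma centralBinom_isEquivalent :
    (fun k : ℕ => (k.centralBinom : ℝ)) ~[atTop] centralBinomAsymp := by
  have hS := Stirling.factorial_isEquivalent_stirling
  have h2 : Tendsto (fun k : ℕ => 2 * k) atTop atTop := tendsto_id.const_mul_atTop' two_pos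
  refine (((hS.comp_tendsto h2).div (hS.pow 2)).congr_left ?_).congr_right ?_
  · exact Eventually.of_forall fun k => by simp [cast_centralBinom_eq_factorial_div]
  · -- Stirling's approximation `S k = √(2kπ) (k/e)ᵏ` satisfies `S (2k) / S k ² = 4ᵏ / √(πk)`.
    filter_upwards [eventually_ne_atTop 0] with k hk0
    have hk : (0 : ℝ) < k := by positivity
    have hs : √(π * k) ^ 2 = π * k := sq_sqrt (by positivity)
    have hpow : (2 * k / exp 1) ^ (2 * k) = 4 ^ k * ((k / exp 1) ^ k) ^ 2 := by
      rw [pow_mul, mul_div_assoc, mul_pow, ← pow_mul, mul_comm k 2, pow_mul]; norm_num; ring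
    simp only [Function.comp, Pi.div_apply, Pi.pow_apply, centralBinomAsymp]
    push_cast
    rw [hpow, mul_pow, sq_sqrt (by positivity),
      show 2 * (2 * (k : ℝ)) * π = 2 ^ 2 * (π * k) by ring, sqrt_mul (by positivity),
      sqrt_sq (by norm_num), show 2 * (k : ℝ) * π = 2 * √(π * k) ^ 2 by rw [hs]; ring]
    field_simp

noncomputable def prefactor (M N : ℕ) : ℝ :=
  ((2 * N)! ^ 2 * (2 * M)! * (M + 2 * N - 1)! : ℝ) / (2 * N ! ^ 2 * M ! * (2 * M + 4 * N - 2)!) *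
    (shiftedR M (N - 1) * shiftedR (M + N + 1) (N - 1) / (N - 1)! ^ 2)

lemma prefactor_eq_centralBinom {M N : ℕ} (hM : 1 ≤ M) (hN : 1 ≤ N) :
    prefactor M N = (N.centralBinom : ℝ) ^ 2 * M.centralBinom / (M + 2 * N - 1).centralBinom *
      (N ^ 2 * M / (2 * (M + N) * (M + N - 1))) := by
  obtain ⟨p, rfl⟩ : ∃ p, N = p + 1 := ⟨N - 1, by omega⟩
  obtain ⟨q, rfl⟩ : ∃ q, M = q + 1 := ⟨M - 1, by omega⟩
  have hK : q + 1 + 2 * (p + 1) - 1 = q + p + 2 + p := by omega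
  have h2K : 2 * (q + 1) + 4 * (p + 1) - 2 = 2 * (q + p + 2 + p) := by omega
  have hcast : ((q + 1 : ℕ) : ℝ) + (p + 1 : ℕ) + 1 = (q + p + 2 + 1 : ℕ) := by push_cast; ring
  have e₁ : ((q + 1).ascFactorial p : ℝ) = (q + p)! / q ! := by
    rw [eq_div_iff (by positivity), mul_comm]
    exact_mod_cast Nat.factorial_mul_ascFactorial q p
  have e₂ : ((q + p + 2 + 1).ascFactorial p : ℝ) = (q + p + 2 + p)! / (q + p + 2)! := by
    rw [eq_div_iff (by positivity), mul_comm]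
    exact_mod_cast Nat.factorial_mul_ascFactorial (q + p + 2) p
  unfold prefactor
  simp only [cast_centralBinom_eq_factorial_div]
  rw [hK, h2K, Nat.add_sub_cancel, hcast, shiftedR_natCast, shiftedR_natCast, e₁, e₂,
    Nat.factorial_succ p, Nat.factorial_succ q, show q + p + 2 = q + p + 1 + 1 by ring,
    Nat.factorial_succ (q + p + 1), Nat.factorial_succ (q + p),
    show 2 * (p + 1) = 2 * p + 2 by ring, show 2 * (q + 1) = 2 * q + 2 by ring]
  push_cast
  rw [show (q : ℝ) + 1 + (p + 1) - 1 = q + p + 1 by ring]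
  field_simp
  ring

noncomputable def prefactorApprox (x y : ℝ) : ℝ :=
  2 * y * √(x * (x + 2 * y - 1)) / (π * (x + y) * (x + y - 1))

lemma centralBinomAsymp_ratio_eq_prefactorApprox {M N : ℕ} (hM : 1 ≤ M) (hN : 1 ≤ N) :
    centralBinomAsymp N ^ 2 * centralBinomAsymp M / centralBinomAsymp (M + 2 * N - 1) *
      (N ^ 2 * M / (2 * (M + N) * (M + N - 1))) = prefactorApprox M N := by
  have hK : ((M + 2 * N - 1 : ℕ) : ℝ) = M + 2 * N - 1 := by
    rw [Nat.cast_sub (by omega)]; push_cast; ring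
  have hpow : (4 : ℝ) ^ N * 4 ^ N * 4 ^ M = 4 * 4 ^ (M + 2 * N - 1) := by
    rw [← pow_succ', ← pow_add, ← pow_add]; congr 1; omega
  have hsπ := sq_sqrt pi_pos.le
  have hsN := sq_sqrt (Nat.cast_nonneg (α := ℝ) N)
  have hsM := sq_sqrt (Nat.cast_nonneg (α := ℝ) M)
  unfold centralBinomAsymp prefactorApprox
  rw [hK, sqrt_mul pi_pos.le, sqrt_mul pi_pos.le, sqrt_mul pi_pos.le, sqrt_mul (by positivity)]
  field_simp
  rw [hsπ, hsN, hsM, sq ((4 : ℝ) ^ N), hpow]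
  ring

lemma prefactor_isEquivalent {m : ℕ → ℕ} (hm : Tendsto m atTop atTop) :
    (fun n => prefactor (m n) n) ~[atTop] fun n => prefactorApprox (m n) n := by
  have hK : Tendsto (fun n => m n + 2 * n - 1) atTop atTop :=
    tendsto_atTop_mono (fun n => show n ≤ _ by omega) tendsto_id
  have hC := centralBinom_isEquivalent
  refine ((((hC.pow 2).mul (hC.comp_tendsto hm)).div (hC.comp_tendsto hK)).mul
    (IsEquivalent.refl (u := fun n : ℕ => (n ^ 2 * m n / (2 * (m n + n) * (m n + n - 1)) : ℝ)))
    |>.congr_left ?_).congr_right ?_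
  all_goals filter_upwards [hm.eventually_ge_atTop 1, eventually_ge_atTop 1] with n hmn hn
  · exact (prefactor_eq_centralBinom hmn hn).symm
  · exact centralBinomAsymp_ratio_eq_prefactorApprox hmn hn

lemma tendsto_add_mul_add_div_natCast {x : ℕ → ℝ} {a : ℝ}
    (hx : Tendsto (fun n => x n / n) atTop (𝓝 a)) (b c : ℝ) :
    Tendsto (fun n => (x n + b * n + c) / n) atTop (𝓝 (a + b)) := by
  have h := (hx.add_const b).add (tendsto_const_div_atTop_nhds_zero_nat c)
  rw [add_zero] at h
  refine h.congr' ?_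
  filter_upwards [eventually_ne_atTop 0] with n hn
  field_simp

lemma tendsto_prefactorApprox {x : ℕ → ℝ} {a : ℝ} (ha : 0 ≤ a)
    (hx : Tendsto (fun n => x n / n) atTop (𝓝 a)) :
    Tendsto (fun n => prefactorApprox (x n) n) atTop
      (𝓝 (2 * √(a * (a + 2)) / (π * (a + 1) ^ 2))) := by
  have hK : Tendsto (fun n => (x n + 2 * n - 1) / n) atTop (𝓝 (a + 2)) := by
    simpa [sub_eq_add_neg] using tendsto_add_mul_add_div_natCast hx 2 (-1)
  have hS : Tendsto (fun n => (x n + n) / n) atTop (𝓝 (a + 1)) := by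
    simpa using tendsto_add_mul_add_div_natCast hx 1 0
  have hS' : Tendsto (fun n => (x n + n - 1) / n) atTop (𝓝 (a + 1)) := by
    simpa [sub_eq_add_neg] using tendsto_add_mul_add_div_natCast hx 1 (-1)
  have h := ((hx.mul hK).sqrt.const_mul 2).div ((hS.mul hS').const_mul π) (by positivity)
  rw [← sq] at h
  refine h.congr' ?_
  filter_upwards [eventually_ne_atTop 0] with n hn
  have hsqrt : √(x n / n * ((x n + 2 * n - 1) / n)) = √(x n * (x n + 2 * n - 1)) / n := by
    rw [div_mul_div_comm, sqrt_div' _ (by positivity), sqrt_mul_self (by positivity)]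
  simp only [Pi.div_apply, prefactorApprox, hsqrt]
  field_simp

lemma tendsto_atTop_of_tendsto_div_natCast {m : ℕ → ℕ} {a : ℝ} (ha : 0 < a)
    (hm : Tendsto (fun n => (m n : ℝ) / n) atTop (𝓝 a)) : Tendsto m atTop atTop := by
  refine tendsto_natCast_atTop_iff.mp ((hm.pos_mul_atTop ha tendsto_natCast_atTop_atTop).congr' ?_)
  filter_upwards [eventually_ne_atTop 0] with n hn
  field_simp

theorem prefactor_limit_general (a : ℝ) (ha : 0 < a) (m : ℕ → ℕ)
    (hm : Filter.Tendsto (fun n : ℕ => (m n : ℝ) / (n : ℝ)) Filter.atTop (nhds a)) :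
    Filter.Tendsto
      (fun n : ℕ =>
        ((Nat.factorial (2*n) : ℝ)^2 * (Nat.factorial (2*(m n)) : ℝ) *
            (Nat.factorial (m n + 2*n - 1) : ℝ)) /
          (2 * (Nat.factorial n : ℝ)^2 * (Nat.factorial (m n) : ℝ) *
            (Nat.factorial (2*(m n) + 4*n - 2) : ℝ)) *
        ((shiftedR ((m n : ℝ)) (n-1) * shiftedR ((m n : ℝ) + (n : ℝ) + 1) (n-1)) /
          (Nat.factorial (n-1) : ℝ)^2))
      Filter.atTop
      (nhds (2 * Real.sqrt (a*(a+2)) / (Real.pi * (a+1)^2))) :=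
  (prefactor_isEquivalent (tendsto_atTop_of_tendsto_div_natCast ha hm)).symm.tendsto_nhds
    (tendsto_prefactorApprox ha.le hm)

theorem prefactor_limit (a : ℝ) (ha : 0 < a) (m : ℕ → ℕ) (hm1 : ∀ n, 1 ≤ m n)
    (hm : Filter.Tendsto (fun n : ℕ => (m n : ℝ) / (n : ℝ)) Filter.atTop (nhds a)) :
    Filter.Tendsto
      (fun n : ℕ =>
        ((Nat.factorial (2*n) : ℝ)^2 * (Nat.factorial (2*(m n)) : ℝ) *
            (Nat.factorial (m n + 2*n - 1) : ℝ)) /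
          (2 * (Nat.factorial n : ℝ)^2 * (Nat.factorial (m n) : ℝ) *
            (Nat.factorial (2*(m n) + 4*n - 2) : ℝ)) *
        ((shiftedR ((m n : ℝ)) (n-1) * shiftedR ((m n : ℝ) + (n : ℝ) + 1) (n-1)) /
          (Nat.factorial (n-1) : ℝ)^2))
      Filter.atTop
      (nhds (2 * Real.sqrt (a*(a+2)) / (Real.pi * (a+1)^2))) :=
  prefactor_limit_general a ha m hm
end

section
/- Let N be a positive integer and let X_1,…,X_N, A_2,…,A_N, B_2,…,B_N be elements of a commutative ring. Then det_{1≤i,j≤N}( (X_i+A_N)(X_i+A_{N−1})···(X_i+A_{j+1}) · (X_i+B_j)(X_i+B_{j−1})···(X_i+B_2) ) = ∏_{1≤i<j≤N}(X_i−X_j) · ∏_{2≤i≤j≤N}(B_i−A_j), where an empty product of factors equals 1. -/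
/-!
Reindex by `x i = X (i + 1)`, `a k = A (k + 1)`, `b l = B (l + 2)` with all indices from `0`, and
let `q k = ∏_{l < k} (X + b l)`, monic of degree `k`. Column `j` of the matrix consists of the values
at the `x i` of `q j * ∏_{j < k < n} (X + a k)`. Expanding the second factor in the Newton basis with
nodes `-b j, -b (j + 1), …` writes this column as a combination of `q j, q (j + 1), …`, with
coefficient `∏_{j < k < n} (a k - b j)` (the value of that factor at `-b j`) on `q j`. Hence the
matrix is `(q k (x i))_{i,k}` times a triangular matrix: the first factor has the Vandermonde
determinant, the second the product of these diagonal coefficients.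
-/

open Finset Polynomial Matrix

section

variable {R : Type*} [CommRing R]

theorem Polynomial.exists_eq_sum_C_mul_prod_X_sub_C (b : ℕ → R) {p : R[X]} {n : ℕ}
    (hp : p.natDegree ≤ n) :
    ∃ c : ℕ → R, p = ∑ k ∈ range (n + 1), C (c k) * ∏ l ∈ range k, (X - C (b l)) ∧
      c 0 = p.eval (b 0) := by
  induction n generalizing p b with
  | zero =>
    refine ⟨fun _ => p.eval (b 0), ?_, rfl⟩
    rw [eq_C_of_natDegree_le_zero hp]
    simp
  | succ n ih =>
    nontriviality R
    have hdiv := modByMonic_add_div p (X - C (b 0))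
    rw [modByMonic_X_sub_C_eq_C_eval] at hdiv
    have hq : (p /ₘ (X - C (b 0))).natDegree ≤ n := by
      rw [natDegree_divByMonic _ (monic_X_sub_C _), natDegree_X_sub_C]
      omega
    obtain ⟨c, hc, -⟩ := ih (fun l => b (l + 1)) hq
    refine ⟨fun k => Nat.casesOn k (p.eval (b 0)) c, ?_, rfl⟩
    conv_lhs => rw [← hdiv, hc, mul_sum]
    rw [sum_range_succ' _ (n + 1)]
    simp only [prod_range_succ', prod_range_zero, mul_one]
    rw [add_comm]
    exact congrArg₂ (· + ·) (sum_congr rfl fun k _ => by ring) rfl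

theorem exists_prod_add_mul_prod_add_eq_sum (a b : ℕ → R) {j n : ℕ} (hj : j < n) :
    ∃ c : ℕ → R, (∀ y : R, (∏ k ∈ Ioo j n, (y + a k)) * ∏ k ∈ range j, (y + b k) =
        ∑ k ∈ range n, c k * ∏ l ∈ range k, (y + b l)) ∧
      (∀ k < j, c k = 0) ∧ c j = ∏ k ∈ Ioo j n, (a k - b j) := by
  obtain ⟨d, rfl⟩ : ∃ d, n = j + d + 1 := ⟨n - j - 1, by omega⟩
  have hdeg : (∏ k ∈ Ioo j (j + d + 1), (X + C (a k))).natDegree ≤ d :=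
    (natDegree_prod_le _ _).trans <|
      (sum_le_card_nsmul _ _ 1 fun _ _ => natDegree_add_C.trans_le natDegree_X_le).trans
        (by rw [smul_eq_mul, mul_one, Nat.card_Ioo]; omega)
  obtain ⟨c, hc, hc0⟩ := exists_eq_sum_C_mul_prod_X_sub_C (fun l => -b (j + l)) hdeg
  refine ⟨fun k => if j ≤ k then c (k - j) else 0, fun y => ?_, fun k hk => if_neg (by omega), ?_⟩
  · have hy := congrArg (eval y) hc
    simp only [eval_prod, eval_finsetSum, eval_mul, eval_add, eval_sub, eval_X, eval_C,
      sub_neg_eq_add] at hy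
    rw [hy, sum_mul, add_assoc, sum_range_add _ j (d + 1),
      sum_eq_zero (s := range j) fun k hk => by simp [not_le.mpr (mem_range.mp hk)], zero_add]
    refine sum_congr rfl fun m _ => ?_
    simp only [le_add_iff_nonneg_right, zero_le, if_true, add_tsub_cancel_left, prod_range_add]
    ring
  · simp [hc0, eval_prod, neg_add_eq_sub]

theorem Fin.prod_univ_prod_Ioi_eq_prod_range_prod_Ioo {M : Type*} [CommMonoid M] {n : ℕ}
    (f : ℕ → ℕ → M) : ∏ i : Fin n, ∏ j ∈ Ioi i, f i j = ∏ i ∈ range n, ∏ j ∈ Ioo i n, f i j := by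
  rw [← Fin.prod_univ_eq_prod_range (fun i => ∏ j ∈ Ioo i n, f i j)]
  refine prod_congr rfl fun i _ => ?_
  rw [← Fin.map_valEmbedding_Ioi, prod_map]
  rfl

theorem Matrix.det_prod_range_add_eq_det_vandermonde {n : ℕ} (v : Fin n → R) (b : ℕ → R) :
    det (of fun i k : Fin n => ∏ l ∈ range k, (v i + b l)) = det (vandermonde v) := by
  nontriviality R
  rw [det_eval_matrixOfPolynomials_eq_det_vandermonde v (fun k => ∏ l ∈ range k, (X + C (b l)))
    (fun k => by simp [natDegree_prod_of_monic _ _ fun l _ => monic_X_add_C (b l)])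
    (fun k => monic_prod_of_monic _ _ fun l _ => monic_X_add_C _)]
  simp [eval_prod]

theorem Matrix.det_prod_add_mul_prod_add (n : ℕ) (x a b : ℕ → R) :
    det (of fun i j : Fin n => (∏ k ∈ Ioo (j : ℕ) n, (x i + a k)) * ∏ k ∈ range j, (x i + b k)) =
      (∏ i ∈ range n, ∏ j ∈ Ioo i n, (x i - x j)) * ∏ i ∈ range n, ∏ j ∈ Ioo i n, (b i - a j) := by
  choose c hc hc_lt hc_diag using fun j : Fin n => exists_prod_add_mul_prod_add_eq_sum a b j.isLt
  have hfactor : (of fun i j : Fin n =>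
      (∏ k ∈ Ioo (j : ℕ) n, (x i + a k)) * ∏ k ∈ range j, (x i + b k)) =
      (of fun i k : Fin n => ∏ l ∈ range k, (x i + b l)) * of fun k j : Fin n => c j k := by
    ext i j
    rw [of_apply, hc, mul_apply, ← Fin.sum_univ_eq_sum_range]
    simp [mul_comm]
  have htri : (of fun k j : Fin n => c j k).IsLowerTriangular := fun k j hkj => hc_lt j k hkj
  rw [hfactor, det_mul, det_prod_range_add_eq_det_vandermonde, det_vandermonde,
    det_of_isLowerTriangular _ htri,
    Fin.prod_univ_prod_Ioi_eq_prod_range_prod_Ioo (fun i j => x j - x i)]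
  simp only [of_apply, hc_diag]
  rw [Fin.prod_univ_eq_prod_range (fun j => ∏ k ∈ Ioo j n, (a k - b j))]
  -- both sides are double products over the same index set, so the signs cancel factorwise
  simp only [← prod_mul_distrib]
  exact prod_congr rfl fun _ _ => prod_congr rfl fun _ _ => by ring

end

section

variable {M : Type*} [CommMonoid M] (f : ℕ → M)

theorem Finset.prod_Icc_eq_prod_range (m n : ℕ) :
    ∏ t ∈ Icc m n, f t = ∏ k ∈ range (n + 1 - m), f (k + m) := by
  rw [← Ico_add_one_right_eq_Icc, prod_Ico_eq_prod_range]
  simp only [add_comm]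

theorem Finset.prod_Icc_add_two_eq_prod_Ioo (j n : ℕ) :
    ∏ t ∈ Icc (j + 2) n, f t = ∏ k ∈ Ioo j n, f (k + 1) := by
  rw [← Ico_add_one_right_eq_Icc, ← Ico_add_one_left_eq_Ioo, prod_Ico_add']

theorem Finset.prod_Ioc_add_one_eq_prod_Ioo (j n : ℕ) :
    ∏ t ∈ Ioc (j + 1) n, f t = ∏ k ∈ Ioo j n, f (k + 1) := by
  rw [← Ico_add_one_add_one_eq_Ioc, ← Ico_add_one_left_eq_Ioo, prod_Ico_add']

end

theorem determinant_lemma_general {R : Type*} [CommRing R] (N : ℕ)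
    (X A B : ℕ → R) :
    Matrix.det (Matrix.of fun i j : Fin N =>
        (∏ t ∈ Finset.Icc ((j:ℕ) + 2) N, (X ((i:ℕ) + 1) + A t)) *
          ∏ t ∈ Finset.Icc 2 ((j:ℕ) + 1), (X ((i:ℕ) + 1) + B t))
    = (∏ p ∈ Finset.Icc 1 N, ∏ q ∈ Finset.Ioc p N, (X p - X q)) *
        ∏ i ∈ Finset.Icc 2 N, ∏ j ∈ Finset.Icc i N, (B i - A j) := by
  have hX : ∏ p ∈ Icc 1 N, ∏ q ∈ Ioc p N, (X p - X q) =
      ∏ i ∈ range N, ∏ j ∈ Ioo i N, (X (i + 1) - X (j + 1)) := by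
    simp [prod_Icc_eq_prod_range (m := 1), prod_Ioc_add_one_eq_prod_Ioo]
  have hBA : ∏ i ∈ Icc 2 N, ∏ j ∈ Icc i N, (B i - A j) =
      ∏ i ∈ range N, ∏ j ∈ Ioo i N, (B (i + 2) - A (j + 1)) := by
    calc ∏ i ∈ Icc 2 N, ∏ j ∈ Icc i N, (B i - A j)
        = ∏ i ∈ Icc 2 (N + 1), ∏ j ∈ Icc i N, (B i - A j) := by
          refine prod_subset (Icc_subset_Icc_right N.le_succ) fun i hi hi' => ?_
          rw [Icc_eq_empty (by simp only [mem_Icc] at hi hi'; omega), prod_empty]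
      _ = _ := by simp [prod_Icc_eq_prod_range (m := 2), prod_Icc_add_two_eq_prod_Ioo]
  rw [hX, hBA]
  simp only [prod_Icc_add_two_eq_prod_Ioo, prod_Icc_eq_prod_range (m := 2)]
  simpa using det_prod_add_mul_prod_add N (fun i => X (i + 1)) (fun k => A (k + 1)) (fun k => B (k + 2))

theorem determinant_lemma {R : Type*} [CommRing R] (N : ℕ) (hN : 1 ≤ N)
    (X A B : ℕ → R) :
    Matrix.det (Matrix.of fun i j : Fin N =>
        (∏ t ∈ Finset.Icc ((j:ℕ) + 2) N, (X ((i:ℕ) + 1) + A t)) *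
          ∏ t ∈ Finset.Icc 2 ((j:ℕ) + 1), (X ((i:ℕ) + 1) + B t))
    = (∏ p ∈ Finset.Icc 1 N, ∏ q ∈ Finset.Ioc p N, (X p - X q)) *
        ∏ i ∈ Finset.Icc 2 N, ∏ j ∈ Finset.Icc i N, (B i - A j) :=
  determinant_lemma_general N X A B
end

section
/- Let N be a positive integer and m a nonnegative integer. Then det_{1≤i,j≤N}( C(N+m−i+1, m+i−j) ) = ∏_{i=1}^{N} ( (N+m−i+1)! · (i−1)! · (2m+i+1)_{i−1} ) / ( (m+i−1)! · (2N−2i+1)! ). -/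
/-- Binomial coefficient `C(p,q)` with integer lower index, equal to `0` if `q < 0` or `q > p`. -/
def binom (p : ℕ) (q : ℤ) : ℚ := if q < 0 then 0 else (Nat.choose p q.toNat : ℚ)

/-!
Up to the row factor `(N+m-i)! / ((m+i)! (2N-2i-1)!)`, the entry in row `i` and column `j` is
`Q_j(m+i)` for a polynomial `Q_j` of degree `N-1`, a product of two falling factorials. A
determinant `det (Q_j(x_i))` is the Vandermonde determinant of the nodes `x_i` times a determinant
of coefficients, so it does not change when the nodes `m+i` are translated to `i`. There the matrix
is lower triangular, because the falling factorial `i(i-1)⋯(i-j+1)` vanishes for `i < j`, and its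
diagonal entries are `i! (2m+N-i+1)_{N-1-i}`.
-/

open Polynomial Finset Matrix
open scoped Nat

namespace Matrix

variable {R : Type*} [CommRing R] {n : ℕ}

theorem of_eval_eq_vandermonde_mul_of_coeff (v : Fin n → R) (p : Fin n → R[X])
    (hp : ∀ j, (p j).natDegree < n) :
    of (fun i j => (p j).eval (v i)) = vandermonde v * of (fun k j : Fin n => (p j).coeff k) := by
  ext i j
  rw [mul_apply, of_apply, eval_eq_sum_range' (hp j), ← Fin.sum_univ_eq_sum_range]
  exact sum_congr rfl fun k _ => mul_comm _ _

theorem det_of_eval_add (v : Fin n → R) (a : R) (p : Fin n → R[X])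
    (hp : ∀ j, (p j).natDegree < n) :
    (of fun i j => (p j).eval (v i + a)).det = (of fun i j => (p j).eval (v i)).det := by
  rw [of_eval_eq_vandermonde_mul_of_coeff _ p hp, of_eval_eq_vandermonde_mul_of_coeff v p hp,
    det_mul, det_mul, det_vandermonde_add]

end Matrix

theorem Nat.choose_mul_factorial_add_mul_factorial_add {a b : ℕ} (h : b ≤ a) (j k : ℕ) :
    a.choose b * (b + j)! * (a - b + k)! =
      a ! * (b + j).descFactorial j * (a - b + k).descFactorial k := by
  rw [← factorial_mul_descFactorial (le_add_left j b),
    ← factorial_mul_descFactorial (le_add_left k (a - b)), Nat.add_sub_cancel,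
    Nat.add_sub_cancel, ← choose_mul_factorial_mul_factorial h]
  ring

theorem shifted_eq_ascPochhammer_eval (a : ℚ) (k : ℕ) :
    shifted a k = (ascPochhammer ℚ k).eval a := by
  induction k with
  | zero => simp [shifted]
  | succ k ih => rw [shifted, prod_range_succ, ← shifted, ih, ascPochhammer_succ_eval]

noncomputable def columnPoly (N m j : ℕ) : ℚ[X] :=
  descPochhammer ℚ j * (descPochhammer ℚ (N - 1 - j)).comp (C (2 * N + 2 * m - 1 : ℚ) - 2 * X)

theorem columnPoly_eval (N m j : ℕ) (y : ℚ) :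
    (columnPoly N m j).eval y =
      (descPochhammer ℚ j).eval y *
        (descPochhammer ℚ (N - 1 - j)).eval (2 * N + 2 * m - 1 - 2 * y) := by
  simp [columnPoly, eval_comp]

theorem natDegree_columnPoly_lt {N : ℕ} (m : ℕ) {j : ℕ} (hj : j < N) :
    (columnPoly N m j).natDegree < N := by
  have hlin : (C (2 * N + 2 * m - 1 : ℚ) - 2 * X).natDegree ≤ 1 := by compute_degree
  calc (columnPoly N m j).natDegree ≤ j + (N - 1 - j) * 1 := by
        refine natDegree_mul_le.trans (add_le_add (descPochhammer_natDegree ℚ j).le ?_)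
        exact natDegree_comp_le.trans (by rw [descPochhammer_natDegree]; gcongr)
    _ < N := by omega

theorem binom_eq_mul_columnPoly_eval {N m i j : ℕ} (hi : i < N) (hj : j < N) :
    binom (N + m - i) ((m : ℤ) + i - j) =
      (N + m - i)! / ((m + i)! * (2 * N - 2 * i - 1)! : ℚ) *
        (columnPoly N m j).eval ((i : ℚ) + m) := by
  have hup : (i : ℚ) + m = ((m + i : ℕ) : ℚ) := by push_cast; ring
  have hdown : 2 * N + 2 * m - 1 - 2 * ((m + i : ℕ) : ℚ) = ((2 * N - 2 * i - 1 : ℕ) : ℚ) := by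
    rw [Nat.cast_sub (by omega), Nat.cast_sub (by omega)]; push_cast; ring
  rw [columnPoly_eval, hup, hdown, descPochhammer_eval_eq_descFactorial,
    descPochhammer_eval_eq_descFactorial]
  rcases lt_or_ge (m + i) j with hneg | hb
  · have : (m : ℤ) + i - j < 0 := by omega
    simp [binom, this, Nat.descFactorial_eq_zero_iff_lt.mpr hneg]
  obtain ⟨b, hbj⟩ : ∃ b, m + i = b + j := ⟨m + i - j, by omega⟩
  have hbinom : binom (N + m - i) ((m : ℤ) + i - j) = (N + m - i).choose b := by
    rw [binom, if_neg (by omega), show ((m : ℤ) + i - j).toNat = b by omega]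
  rw [hbinom, hbj]
  rcases lt_or_ge (N + m - i) b with hgt | hle
  · have : 2 * N - 2 * i - 1 < N - 1 - j := by omega
    simp [Nat.choose_eq_zero_of_lt hgt, Nat.descFactorial_eq_zero_iff_lt.mpr this]
  have key := Nat.choose_mul_factorial_add_mul_factorial_add hle j (N - 1 - j)
  rw [show N + m - i - b + (N - 1 - j) = 2 * N - 2 * i - 1 by omega] at key
  rw [div_mul_eq_mul_div, eq_div_iff (by positivity)]
  norm_cast
  rw [← mul_assoc, key, mul_assoc]

theorem columnPoly_eval_self {N : ℕ} (m : ℕ) {i : ℕ} (hi : i < N) :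
    (columnPoly N m i).eval (i : ℚ) = i ! * shifted (2 * m + (N - 1 - i : ℕ) + 2) (N - 1 - i) := by
  rw [columnPoly_eval, descPochhammer_eval_eq_descFactorial, Nat.descFactorial_self,
    descPochhammer_eval_eq_ascPochhammer, shifted_eq_ascPochhammer_eval]
  have hk : ((N - 1 - i : ℕ) : ℚ) = N - 1 - i := by
    rw [Nat.cast_sub (by omega), Nat.cast_sub (by omega)]; push_cast; ring
  congr 2
  rw [hk]
  ring

theorem det_columnPoly_eval (N m : ℕ) :
    (of fun i j : Fin N => (columnPoly N m j).eval ((i : ℕ) : ℚ)).det =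
      (∏ i ∈ range N, (i ! : ℚ)) * ∏ i ∈ range N, shifted (2 * m + i + 2) i := by
  rw [det_of_isLowerTriangular _ fun i j hij => ?_]
  · simp only [of_apply]
    rw [Fin.prod_univ_eq_prod_range (fun i => (columnPoly N m i).eval (i : ℚ)),
      prod_congr rfl fun i hi => columnPoly_eval_self m (mem_range.mp hi), prod_mul_distrib,
      prod_range_reflect (fun k => shifted (2 * m + k + 2) k)]
  have hij' : (i : ℕ) < j := OrderDual.toDual_lt_toDual.mp hij
  rw [of_apply, columnPoly_eval, descPochhammer_eval_eq_descFactorial,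
    Nat.descFactorial_eq_zero_iff_lt.mpr hij', Nat.cast_zero, zero_mul]

theorem binomial_det_eval_general (N m : ℕ) :
    Matrix.det (Matrix.of fun i j : Fin N =>
        binom (N + m - (i:ℕ)) ((m:ℤ) + ((i:ℕ):ℤ) - ((j:ℕ):ℤ)))
    = ∏ i ∈ Finset.range N,
        ((Nat.factorial (N + m - i) : ℚ) * (Nat.factorial i : ℚ) *
            shifted (2*(m:ℚ) + (i:ℚ) + 2) i) /
          ((Nat.factorial (m + i) : ℚ) * (Nat.factorial (2*N - 2*i - 1) : ℚ)) := by
  have hfactor : (of fun i j : Fin N => binom (N + m - (i:ℕ)) ((m:ℤ) + ((i:ℕ):ℤ) - ((j:ℕ):ℤ))) =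
      diagonal (fun i : Fin N => (N + m - i)! / ((m + i)! * (2 * N - 2 * i - 1)! : ℚ)) *
        of fun i j : Fin N => (columnPoly N m j).eval (((i : ℕ) : ℚ) + m) := by
    ext i j
    rw [diagonal_mul, of_apply, of_apply]
    exact binom_eq_mul_columnPoly_eval i.isLt j.isLt
  rw [hfactor, det_mul, det_diagonal,
    det_of_eval_add (fun i : Fin N => ((i : ℕ) : ℚ)) _ _ fun j => natDegree_columnPoly_lt m j.isLt,
    det_columnPoly_eval, Fin.prod_univ_eq_prod_range
      (fun i => (N + m - i)! / ((m + i)! * (2 * N - 2 * i - 1)! : ℚ)),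
    ← prod_mul_distrib, ← prod_mul_distrib]
  exact prod_congr rfl fun i _ => by ring

theorem binomial_det_eval (N m : ℕ) (hN : 1 ≤ N) :
    Matrix.det (Matrix.of fun i j : Fin N =>
        binom (N + m - (i:ℕ)) ((m:ℤ) + ((i:ℕ):ℤ) - ((j:ℕ):ℤ)))
    = ∏ i ∈ Finset.range N,
        ((Nat.factorial (N + m - i) : ℚ) * (Nat.factorial i : ℚ) *
            shifted (2*(m:ℚ) + (i:ℚ) + 2) i) /
          ((Nat.factorial (m + i) : ℚ) * (Nat.factorial (2*N - 2*i - 1) : ℚ)) :=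
  binomial_det_eval_general N m
end

section
/- Let n be a positive integer and regard D(m;n) as a polynomial in the indeterminate m over the rationals. Then the polynomial ∏_{i=1}^{n−1} (m+i)_{2n−2i} = ∏_{i=1}^{n−1} ∏_{t=0}^{2n−2i−1} (m+i+t) divides D(m;n) in ℚ[m]. -/
open Polynomial

/-- Shifted factorial `(p)_k = p(p+1)···(p+k-1)` for a polynomial `p`. -/
noncomputable def shiftedP (p : Polynomial ℚ) (k : ℕ) : Polynomial ℚ :=
  ∏ t ∈ Finset.range k, (p + (t : Polynomial ℚ))

/-- The determinant `D(m;n)`, as a polynomial in the indeterminate `m`, of the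
`(2n-1)×(2n-1)` matrix with (1-based) `(i,j)`-entry
`(m+i-j+1)_{j-1} (2n-2i+j+1)_{2n-j-1} c_{ij}`, where `c_{ij} = n+m-j/2` if `i ≠ n`
and `c_{ij} = j` if `i = n`. -/
noncomputable def DfunP (n : ℕ) : Polynomial ℚ :=
  Matrix.det (Matrix.of fun i j : Fin (2*n-1) =>
    shiftedP (Polynomial.X + Polynomial.C ((i:ℚ) - (j:ℚ) + 1)) (j:ℕ) *
      shiftedP (Polynomial.C (2*(n:ℚ) - 2*(i:ℚ) + (j:ℚ))) (2*n - (j:ℕ) - 2) *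
      (if (i:ℕ) + 1 = n then Polynomial.C ((j:ℚ) + 1)
        else Polynomial.X + Polynomial.C ((n:ℚ) - ((j:ℚ) + 1)/2)))

lemma shiftedP_add (p : Polynomial ℚ) (a b : ℕ) :
    shiftedP p (a + b) = shiftedP p a * shiftedP (p + (a : Polynomial ℚ)) b := by
  unfold shiftedP
  rw [Finset.prod_range_add]
  congr 1
  refine Finset.prod_congr rfl fun t _ => ?_
  push_cast
  ring

lemma shiftedP_one (p : Polynomial ℚ) : shiftedP p 1 = p := by
  unfold shiftedP
  simp

lemma shiftedP_const_eq_zero (a : ℚ) (k t : ℕ) (ht : t < k) (h : a + t = 0) :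
    shiftedP (C a) k = 0 := by
  unfold shiftedP
  apply Finset.prod_eq_zero (Finset.mem_range.2 ht)
  rw [← Polynomial.C_eq_natCast, ← Polynomial.C_add, h, Polynomial.C_0]

lemma dvd_det_of_row_dvd {N : ℕ} (M : Matrix (Fin N) (Fin N) (Polynomial ℚ))
    (d : Fin N → Polynomial ℚ) (h : ∀ i j, d i ∣ M i j) :
    (∏ i, d i) ∣ M.det := by
  choose q hq using h
  have hM : M = Matrix.diagonal d * Matrix.of q := by
    ext i j
    rw [Matrix.diagonal_mul, Matrix.of_apply, hq]
  rw [hM, Matrix.det_mul, Matrix.det_diagonal]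
  exact Dvd.intro _ rfl

theorem factor_of_D_poly (n : ℕ) (hn : 1 ≤ n) :
    (∏ i ∈ Finset.range (n-1),
        shiftedP (Polynomial.X + Polynomial.C ((i:ℚ) + 1)) (2*n - 2*(i+1)))
      ∣ DfunP n := by
  set F : ℕ → Polynomial ℚ :=
    fun k => shiftedP (Polynomial.X + Polynomial.C ((k:ℚ) + 1)) (2*n - 2*(k+1)) with hF
  set d0 : ℕ → Polynomial ℚ := fun i => if n ≤ i then F (2*n-2-i) else 1 with hd0
  have key : (∏ i : Fin (2*n-1), d0 (i:ℕ)) ∣ DfunP n := by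
    apply dvd_det_of_row_dvd
    intro i j
    rw [Matrix.of_apply]
    show d0 (i:ℕ) ∣ _
    by_cases hni : n ≤ (i:ℕ)
    · -- the interesting rows
      have hiI : (i:ℕ) < 2*n-1 := i.isLt
      have hjI : (j:ℕ) < 2*n-1 := j.isLt
      obtain ⟨e, he⟩ : ∃ e, (i:ℕ) + e = 2*n-2 := ⟨2*n-2-(i:ℕ), by omega⟩
      have hd0i : d0 (i:ℕ) =
          shiftedP (Polynomial.X + Polynomial.C ((e:ℚ) + 1)) (2*n - 2*(e+1)) := by
        have h1 : 2*n-2-(i:ℕ) = e := by omega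
        simp only [hd0, if_pos hni, h1, hF]
      have he2 : e + 2 ≤ n := by omega
      have heq : ((i:ℕ):ℚ) + (e:ℚ) = 2*(n:ℚ) - 2 := by
        have h2 := congrArg (Nat.cast : ℕ → ℚ) he
        rw [Nat.cast_sub (by omega : 2 ≤ 2*n)] at h2
        push_cast at h2
        linarith
      have hif : ¬ ((i:ℕ) + 1 = n) := by omega
      rw [if_neg hif, hd0i]
      rcases lt_trichotomy ((j:ℕ) + 1) (2*n - 2*(e+1)) with hc | hc | hc
      · -- second (constant) factor of the entry is the zero polynomial
        obtain ⟨t, ht⟩ : ∃ t, t + (j:ℕ) + 2*e + 4 = 2*n := ⟨2*n - (j:ℕ) - 2*e - 4, by omega⟩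
        have htq : (t:ℚ) + ((j:ℕ):ℚ) + 2*(e:ℚ) + 4 = 2*(n:ℚ) := by exact_mod_cast ht
        have hB : shiftedP (Polynomial.C (2*(n:ℚ) - 2*((i:ℕ):ℚ) + ((j:ℕ):ℚ)))
            (2*n - (j:ℕ) - 2) = 0 := by
          apply shiftedP_const_eq_zero _ _ t (by omega)
          linarith
        rw [hB, mul_zero, zero_mul]
        exact dvd_zero _
      · -- boundary column: the linear factor completes the product
        have hJq : ((j:ℕ):ℚ) + 2*(e:ℚ) + 3 = 2*(n:ℚ) := by
          have hj' : (j:ℕ) + 2*e + 3 = 2*n := by omega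
          exact_mod_cast hj'
        have hb1 : (Polynomial.X : Polynomial ℚ) + Polynomial.C ((e:ℚ) + 1) =
            Polynomial.X + Polynomial.C ((n:ℚ) - (((j:ℕ):ℚ) + 1)/2) := by
          have : (e:ℚ) + 1 = (n:ℚ) - (((j:ℕ):ℚ) + 1)/2 := by linarith
          rw [this]
        have hb2 : (Polynomial.X : Polynomial ℚ) + Polynomial.C ((e:ℚ) + 1)
              + ((1:ℕ) : Polynomial ℚ) =
            Polynomial.X + Polynomial.C (((i:ℕ):ℚ) - ((j:ℕ):ℚ) + 1) := by
          rw [← Polynomial.C_eq_natCast, add_assoc, ← Polynomial.C_add]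
          congr 1
          rw [Polynomial.C_inj]
          push_cast
          linarith
        have hdi : shiftedP (Polynomial.X + Polynomial.C ((e:ℚ) + 1)) (2*n - 2*(e+1)) =
            (Polynomial.X + Polynomial.C ((n:ℚ) - (((j:ℕ):ℚ) + 1)/2)) *
            shiftedP (Polynomial.X + Polynomial.C (((i:ℕ):ℚ) - ((j:ℕ):ℚ) + 1)) (j:ℕ) := by
          have hsplit : 2*n - 2*(e+1) = 1 + (j:ℕ) := by omega
          rw [hsplit, shiftedP_add, shiftedP_one, hb2, hb1]
        exact ⟨shiftedP (Polynomial.C (2*(n:ℚ) - 2*((i:ℕ):ℚ) + ((j:ℕ):ℚ)))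
            (2*n - (j:ℕ) - 2), by rw [hdi]; ring⟩
      · -- generic column: the first factor contains the whole divisor
        obtain ⟨f, hf⟩ : ∃ f, f + (2*n - 2*(e+1)) = (j:ℕ) := ⟨(j:ℕ) - (2*n - 2*(e+1)), by omega⟩
        have hfq : (f:ℚ) + (2*(n:ℚ) - 2*((e:ℚ)+1)) = ((j:ℕ):ℚ) := by
          have h3 : ((f + (2*n - 2*(e+1)) : ℕ) : ℚ) = ((j:ℕ):ℚ) := by exact_mod_cast hf
          rw [Nat.cast_add, Nat.cast_sub (by omega : 2*(e+1) ≤ 2*n)] at h3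
          push_cast at h3
          linarith
        have hA : shiftedP (Polynomial.X + Polynomial.C (((i:ℕ):ℚ) - ((j:ℕ):ℚ) + 1))
              (f + (2*n - 2*(e+1))) =
            shiftedP (Polynomial.X + Polynomial.C (((i:ℕ):ℚ) - ((j:ℕ):ℚ) + 1)) f *
            shiftedP (Polynomial.X + Polynomial.C ((e:ℚ) + 1)) (2*n - 2*(e+1)) := by
          rw [shiftedP_add]
          congr 2
          rw [← Polynomial.C_eq_natCast, add_assoc, ← Polynomial.C_add]
          congr 1
          rw [Polynomial.C_inj]
          linarith
        rw [hf] at hA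
        have hdvd : shiftedP (Polynomial.X + Polynomial.C ((e:ℚ) + 1)) (2*n - 2*(e+1)) ∣
            shiftedP (Polynomial.X + Polynomial.C (((i:ℕ):ℚ) - ((j:ℕ):ℚ) + 1)) (j:ℕ) :=
          ⟨_, by rw [hA]; ring⟩
        exact (hdvd.mul_right _).mul_right _
    · simp only [hd0, if_neg hni]
      exact one_dvd _
  refine dvd_trans (dvd_of_eq ?_) key
  rw [Fin.prod_univ_eq_prod_range (fun i => d0 i) (2*n-1), hd0]
  rw [← Finset.prod_filter]
  refine Finset.prod_nbij' (fun k => 2*n-2-k) (fun i => 2*n-2-i) ?_ ?_ ?_ ?_ ?_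
  all_goals intro a ha
  all_goals simp only [Finset.mem_filter, Finset.mem_range] at *
  · omega
  · omega
  · omega
  · omega
  · have hkk : 2*n-2-(2*n-2-a) = a := by omega
    rw [hkk]
end

section
/- Let n, j, l be integers with n ≥ 1, 1 ≤ j ≤ n−1, 0 ≤ l ≤ n−2 and j+l < n. Then (−1)^{j−1} · (j+l−n+3/2)_{2n−j−2l−2} · (2n−2j−2l−1)_{2j+2l+1} / ( 4^j · (n−j−l)_j ) + Σ_{s=2n−j−2l−1}^{2n−2l−1} C(j, s+j+2l−2n+1) · (n−j−l−s+1/2)_{s−1} · (s)_{2n−s} = 0. -/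
lemma shifted_zero (a : ℚ) : shifted a 0 = 1 := by simp [shifted]

lemma shifted_succ (a : ℚ) (k : ℕ) : shifted a (k+1) = shifted a k * (a + k) := by
  simp [shifted, Finset.prod_range_succ]

lemma shifted_add (a : ℚ) (k l : ℕ) :
    shifted a (k + l) = shifted a k * shifted (a + k) l := by
  unfold shifted
  rw [Finset.prod_range_add]
  congr 1
  refine Finset.prod_congr rfl fun t _ => ?_
  push_cast; ring

lemma shifted_reflect (a : ℚ) (k : ℕ) :
    shifted a k = (-1)^k * shifted (1 - a - k) k := by
  unfold shifted
  rw [← Finset.prod_range_reflect]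
  have step : ∀ t ∈ Finset.range k, (a + ((k - 1 - t : ℕ) : ℚ)) = (-1) * (1 - a - k + t) := by
    intro t ht
    have ht' : t < k := Finset.mem_range.mp ht
    have hc : ((k - 1 - t : ℕ) : ℚ) = (k : ℚ) - 1 - t := by
      have h2 : k - 1 - t = k - (1 + t) := by omega
      rw [h2, Nat.cast_sub (by omega : 1 + t ≤ k)]
      push_cast; ring
    rw [hc]; ring
  rw [Finset.prod_congr rfl step, Finset.prod_mul_distrib, Finset.prod_const,
    Finset.card_range]

lemma shifted_pos (a : ℚ) (ha : 0 < a) (k : ℕ) : 0 < shifted a k := by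
  refine Finset.prod_pos fun t _ => ?_
  positivity

lemma shifted_dup (k : ℕ) (a : ℚ) :
    shifted (2*a) (2*k) = 4^k * shifted a k * shifted (a + 1/2) k := by
  induction k with
  | zero => simp [shifted_zero]
  | succ k ih =>
      have h2 : 2*(k+1) = (2*k+1)+1 := by ring
      rw [h2, shifted_succ, shifted_succ, shifted_succ, shifted_succ, ih]
      push_cast
      ring

lemma vand (k : ℕ) : ∀ u v : ℚ,
    ∑ i ∈ Finset.range (k+1), (k.choose i : ℚ) * (shifted u i * shifted v (k-i))
      = shifted (u+v) k := by
  induction k with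
  | zero => intro u v; simp [shifted_zero]
  | succ k ih =>
      intro u v
      have split : ∀ i ∈ Finset.range (k+1),
          (k.choose i : ℚ) * (shifted u i * shifted v (k-i)) * ((u+v) + k)
            = (k.choose i : ℚ) * (shifted u (i+1) * shifted v (k-i))
              + (k.choose i : ℚ) * (shifted u i * shifted v (k+1-i)) := by
        intro i hi
        have hik : i ≤ k := by
          have := Finset.mem_range.mp hi; omega
        have h1 : k+1-i = (k-i)+1 := by omega
        have hc : ((k - i : ℕ) : ℚ) = (k : ℚ) - i := by
          push_cast [Nat.cast_sub hik]; ring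
        rw [h1, shifted_succ, shifted_succ, hc]
        ring
      have key : shifted (u+v) (k+1)
          = (∑ i ∈ Finset.range (k+1), (k.choose i : ℚ) * (shifted u (i+1) * shifted v (k-i)))
            + ∑ i ∈ Finset.range (k+1), (k.choose i : ℚ) * (shifted u i * shifted v (k+1-i)) := by
        rw [shifted_succ, ← ih u v, Finset.sum_mul, ← Finset.sum_add_distrib]
        exact Finset.sum_congr rfl split
      rw [key]
      -- now show LHS sum over range (k+2) equals this
      rw [Finset.sum_range_succ' (fun i => ((k+1).choose i : ℚ) * (shifted u i * shifted v (k+1-i))) (k+1)]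
      have e0 : ((k+1).choose 0 : ℚ) * (shifted u 0 * shifted v (k+1-0)) = shifted v (k+1) := by
        simp [shifted_zero]
      rw [e0]
      have e1 : ∀ i ∈ Finset.range (k+1),
          ((k+1).choose (i+1) : ℚ) * (shifted u (i+1) * shifted v (k+1-(i+1)))
          = (k.choose i : ℚ) * (shifted u (i+1) * shifted v (k-i))
            + (k.choose (i+1) : ℚ) * (shifted u (i+1) * shifted v (k-i)) := by
        intro i hi
        have : (k+1).choose (i+1) = k.choose i + k.choose (i+1) := Nat.choose_succ_succ k i
        rw [this]
        have : k+1-(i+1) = k-i := by omega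
        rw [this]
        push_cast
        ring
      rw [Finset.sum_congr rfl e1, Finset.sum_add_distrib]
      -- remains: match the second pieces
      have e2 : (∑ i ∈ Finset.range (k+1), (k.choose (i+1) : ℚ) * (shifted u (i+1) * shifted v (k-i)))
          + shifted v (k+1)
          = ∑ i ∈ Finset.range (k+1), (k.choose i : ℚ) * (shifted u i * shifted v (k+1-i)) := by
        have eL : ∑ i ∈ Finset.range (k+1), (k.choose (i+1) : ℚ) * (shifted u (i+1) * shifted v (k-i))
            = ∑ i ∈ Finset.range k, (k.choose (i+1) : ℚ) * (shifted u (i+1) * shifted v (k-i)) := by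
          rw [Finset.sum_range_succ]
          simp [Nat.choose_succ_self]
        rw [eL, Finset.sum_range_succ' (fun i => (k.choose i : ℚ) * (shifted u i * shifted v (k+1-i))) k]
        simp [shifted_zero]
      linarith [e2]

lemma altvand (k : ℕ) (b c : ℚ) :
    ∑ i ∈ Finset.range (k+1),
        (k.choose i : ℚ) * ((-1)^i * shifted b i * shifted (c + i) (k-i))
      = shifted (c - b) k := by
  have e : ∀ i ∈ Finset.range (k+1),
      (k.choose i : ℚ) * ((-1)^i * shifted b i * shifted (c + i) (k-i))
        = (-1)^k * ((k.choose i : ℚ) * (shifted b i * shifted (1 - c - k) (k-i))) := by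
    intro i hi
    have hik : i ≤ k := by have := Finset.mem_range.mp hi; omega
    rw [shifted_reflect (c + i) (k - i)]
    have hc : ((k - i : ℕ) : ℚ) = (k : ℚ) - i := by push_cast [Nat.cast_sub hik]; ring
    rw [hc]
    have harg : 1 - (c + i) - ((k:ℚ) - i) = 1 - c - k := by ring
    rw [harg]
    have hpow : ((-1:ℚ))^(k-i) * (-1)^i = (-1)^k := by
      rw [← pow_add]; congr 1; omega
    calc (k.choose i : ℚ) * ((-1)^i * shifted b i * ((-1)^(k-i) * shifted (1 - c - k) (k-i)))
        = ((-1)^(k-i) * (-1)^i) * ((k.choose i : ℚ) * (shifted b i * shifted (1 - c - k) (k-i))) := by ring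
      _ = (-1)^k * ((k.choose i : ℚ) * (shifted b i * shifted (1 - c - k) (k-i))) := by rw [hpow]
  rw [Finset.sum_congr rfl e, ← Finset.mul_sum, vand k b (1 - c - k)]
  rw [shifted_reflect (c - b) k]
  congr 1
  ring

lemma core (J L M : ℕ) :
    (-1:ℚ)^J * shifted (1/2 - (M:ℚ)) (2*M+J+1) * shifted (2*(M:ℚ)+1) (2*J+2*L+3)
      / (4^(J+1) * shifted ((M:ℚ)+1) (J+1))
    + ∑ i ∈ Finset.range (J+2),
        ((J+1).choose i : ℚ) * shifted (-1/2 - (M:ℚ) - (J:ℚ) - (i:ℚ)) (2*M+J+1+i)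
          * shifted (2*(M:ℚ)+(J:ℚ)+2+(i:ℚ)) (J+2*L+2-i) = 0 := by
  set c : ℚ := 2*(M:ℚ)+(J:ℚ)+2 with hc
  have hDpos : (0:ℚ) < 4^(J+1) * shifted ((M:ℚ)+1) (J+1) := by
    have := shifted_pos ((M:ℚ)+1) (by positivity) (J+1)
    positivity
  have hD : (4:ℚ)^(J+1) * shifted ((M:ℚ)+1) (J+1) ≠ 0 := ne_of_gt hDpos
  have hC : shifted c (J+1) ≠ 0 := by
    have : (0:ℚ) < c := by rw [hc]; positivity
    exact ne_of_gt (shifted_pos c this (J+1))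
  rw [div_add' _ _ _ hD, div_eq_zero_iff]
  left
  have key : ((-1:ℚ)^J * shifted (1/2 - (M:ℚ)) (2*M+J+1) * shifted (2*(M:ℚ)+1) (2*J+2*L+3)
      + (∑ i ∈ Finset.range (J+2),
          ((J+1).choose i : ℚ) * shifted (-1/2 - (M:ℚ) - (J:ℚ) - (i:ℚ)) (2*M+J+1+i)
            * shifted (2*(M:ℚ)+(J:ℚ)+2+(i:ℚ)) (J+2*L+2-i))
        * (4^(J+1) * shifted ((M:ℚ)+1) (J+1))) * shifted c (J+1) = 0 := by
    rw [add_mul, Finset.sum_mul, Finset.sum_mul]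
    -- rewrite each summand
    have body : ∀ i ∈ Finset.range (J+2),
        ((J+1).choose i : ℚ) * shifted (-1/2 - (M:ℚ) - (J:ℚ) - (i:ℚ)) (2*M+J+1+i)
            * shifted (2*(M:ℚ)+(J:ℚ)+2+(i:ℚ)) (J+2*L+2-i)
          * (4^(J+1) * shifted ((M:ℚ)+1) (J+1)) * shifted c (J+1)
        = ((-1:ℚ)^(J+1) * shifted (1/2 - (M:ℚ)) (2*M+J+1) * shifted c (J+2*L+2)
            * (4^(J+1) * shifted ((M:ℚ)+1) (J+1)))
          * (((J+1).choose i : ℚ)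
              * ((-1)^i * shifted ((M:ℚ)+(J:ℚ)+3/2) i * shifted (c + i) (J+1-i))) := by
      intro i hi
      have hi' : i ≤ J+1 := by have := Finset.mem_range.mp hi; omega
      -- split the first shifted
      have e1 : shifted (-1/2 - (M:ℚ) - (J:ℚ) - (i:ℚ)) (2*M+J+1+i)
          = shifted (-1/2 - (M:ℚ) - (J:ℚ) - (i:ℚ)) i
            * shifted (-1/2 - (M:ℚ) - (J:ℚ)) (2*M+J+1) := by
        rw [show 2*M+J+1+i = i + (2*M+J+1) from by omega, shifted_add]
        congr 1
        ring
      have e2 : shifted (-1/2 - (M:ℚ) - (J:ℚ) - (i:ℚ)) i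
          = (-1)^i * shifted ((M:ℚ)+(J:ℚ)+3/2) i := by
        rw [shifted_reflect]
        congr 2
        ring
      have e3' : shifted (-1/2 - (M:ℚ) - (J:ℚ)) (2*M+J+1)
          = (-1)^(J+1) * shifted (1/2 - (M:ℚ)) (2*M+J+1) := by
        rw [shifted_reflect (-1/2 - (M:ℚ) - (J:ℚ)) (2*M+J+1)]
        rw [show ((-1:ℚ))^(2*M+J+1) = (-1)^(J+1) from by
          rw [show 2*M+J+1 = 2*M + (J+1) from by omega, pow_add, pow_mul]
          norm_num]
        congr 2
        push_cast
        ring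
      have e4 : shifted c (J+1) = shifted c i * shifted (c + i) (J+1-i) := by
        have h := shifted_add c i (J+1-i)
        rw [show i + (J+1-i) = J+1 from by omega] at h
        exact h
      have e5 : shifted c (J+2*L+2) = shifted c i * shifted (c + i) (J+2*L+2-i) := by
        have h := shifted_add c i (J+2*L+2-i)
        rw [show i + (J+2*L+2-i) = J+2*L+2 from by omega] at h
        exact h
      rw [e1, e2, e3', e4, e5]
      ring
    rw [Finset.sum_congr rfl body, ← Finset.mul_sum]
    have hv : ∑ i ∈ Finset.range (J+2),
        ((J+1).choose i : ℚ) * ((-1)^i * shifted ((M:ℚ)+(J:ℚ)+3/2) i * shifted (c + i) (J+1-i))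
        = shifted ((M:ℚ)+1/2) (J+1) := by
      have h := altvand (J+1) ((M:ℚ)+(J:ℚ)+3/2) c
      rw [show c - ((M:ℚ)+(J:ℚ)+3/2) = (M:ℚ)+1/2 from by rw [hc]; ring] at h
      exact h
    rw [hv]
    have hsplit : shifted (2*(M:ℚ)+1) (2*J+2*L+3)
        = shifted (2*(M:ℚ)+1) (J+1) * shifted c (J+2*L+2) := by
      have h := shifted_add (2*(M:ℚ)+1) (J+1) (J+2*L+2)
      rw [show (J+1) + (J+2*L+2) = 2*J+2*L+3 from by omega,
        show 2*(M:ℚ)+1 + ((J+1:ℕ):ℚ) = c from by rw [hc]; push_cast; ring] at h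
      exact h
    have hmerge : shifted (2*(M:ℚ)+1) (J+1) * shifted c (J+1)
        = 4^(J+1) * shifted ((M:ℚ)+1/2) (J+1) * shifted ((M:ℚ)+1) (J+1) := by
      have h1 := shifted_add (2*(M:ℚ)+1) (J+1) (J+1)
      rw [show 2*(M:ℚ)+1 + ((J+1:ℕ):ℚ) = c from by rw [hc]; push_cast; ring] at h1
      have hd := shifted_dup (J+1) ((M:ℚ)+1/2)
      rw [show 2*((M:ℚ)+1/2) = 2*(M:ℚ)+1 from by ring,
        show (M:ℚ)+1/2+1/2 = (M:ℚ)+1 from by ring] at hd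
      rw [← hd, ← h1]
      congr 1
      omega
    rw [hsplit]
    linear_combination ((-1:ℚ)^J * shifted (1/2 - (M:ℚ)) (2*M+J+1)
      * shifted c (J+2*L+2)) * hmerge
  exact (mul_eq_zero.mp key).resolve_right hC

theorem row_n_relation (n j l : ℕ) (hn : 1 ≤ n) (hj1 : 1 ≤ j) (hj2 : j ≤ n - 1)
    (hl : l ≤ n - 2) (hjl : j + l < n) :
    (-1 : ℚ)^(j-1) *
        shifted ((j:ℚ) + (l:ℚ) - (n:ℚ) + 3/2) (2*n - j - 2*l - 2) *
        shifted (2*(n:ℚ) - 2*(j:ℚ) - 2*(l:ℚ) - 1) (2*j + 2*l + 1) /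
        (4^j * shifted ((n:ℚ) - (j:ℚ) - (l:ℚ)) j)
      + ∑ s ∈ Finset.Icc (2*n - j - 2*l - 1) (2*n - 2*l - 1),
          binom j ((s:ℤ) + (j:ℤ) + 2*(l:ℤ) - 2*(n:ℤ) + 1) *
            shifted ((n:ℚ) - (j:ℚ) - (l:ℚ) - (s:ℚ) + 1/2) (s-1) *
            shifted (s:ℚ) (2*n - s)
    = 0 := by
  obtain ⟨J, rfl⟩ : ∃ J, j = J + 1 := ⟨j - 1, by omega⟩
  obtain ⟨M, rfl⟩ : ∃ M, n = J + 1 + l + (M + 1) := ⟨n - (J + 1) - l - 1, by omega⟩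
  rw [← Finset.Ico_add_one_right_eq_Icc, Finset.sum_Ico_eq_sum_range]
  refine Eq.trans ?_ (core J l M)
  congr 1
  · rw [show 2*(J+1+l+(M+1)) - (J+1) - 2*l - 2 = 2*M+J+1 from by omega,
      show 2*(J+1)+2*l+1 = 2*J+2*l+3 from by omega,
      show (J+1) - 1 = J from by omega,
      show ((J+1:ℕ):ℚ) + (l:ℚ) - ((J+1+l+(M+1):ℕ):ℚ) + 3/2 = 1/2 - (M:ℚ) from by
        push_cast; ring,
      show 2*((J+1+l+(M+1):ℕ):ℚ) - 2*((J+1:ℕ):ℚ) - 2*(l:ℚ) - 1 = 2*(M:ℚ)+1 from by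
        push_cast; ring,
      show ((J+1+l+(M+1):ℕ):ℚ) - ((J+1:ℕ):ℚ) - (l:ℚ) = (M:ℚ)+1 from by
        push_cast; ring]
  · rw [show (2*(J+1+l+(M+1)) - 2*l - 1) + 1 - (2*(J+1+l+(M+1)) - (J+1) - 2*l - 1)
        = J + 2 from by omega]
    refine Finset.sum_congr rfl fun i hi => ?_
    have hi' : i ≤ J + 1 := by have := Finset.mem_range.mp hi; omega
    rw [show (2*(J+1+l+(M+1)) - (J+1) - 2*l - 1) + i = J+2*M+2+i from by omega,
      show ((J+2*M+2+i : ℕ):ℤ) + ((J+1:ℕ):ℤ) + 2*(l:ℤ) - 2*((J+1+l+(M+1):ℕ):ℤ) + 1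
        = (i:ℤ) from by push_cast; ring,
      show J+2*M+2+i - 1 = 2*M+J+1+i from by omega,
      show 2*(J+1+l+(M+1)) - (J+2*M+2+i) = J+2*l+2-i from by omega,
      show ((J+1+l+(M+1):ℕ):ℚ) - ((J+1:ℕ):ℚ) - (l:ℚ) - ((J+2*M+2+i:ℕ):ℚ) + 1/2
        = -1/2 - (M:ℚ) - (J:ℚ) - (i:ℚ) from by push_cast; ring,
      show ((J+2*M+2+i : ℕ) : ℚ) = 2*(M:ℚ)+(J:ℚ)+2+(i:ℚ) from by push_cast; ring]
    simp [binom]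
end
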